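/- Suppose J : ℝⁿ × ℝᵐ → ℝ is differentiable at (θ, W(θ)), W : ℝⁿ → ℝᵐ is differentiable at θ, and for every ω ∈ ℝᵐ, J(θ, ω) ≤ J(θ, W(θ)) with equality characterizing W(θ) as a global maximizer of J(θ, ·); more generally assume W(θ') maximizes J(θ', ·) for all θ'. Then H is differentiable at θ and its derivative is the partial derivative of J in the first coordinate at (θ, W(θ)): for every v ∈ ℝⁿ, DH(θ)(v) = DJ(θ, W(θ))(v, 0). -/

import Mathlib

/-! Envelope theorem. By the chain rule, `DH(θ) v = DJ(θ, W θ) (v, DW v)`. Since `W θ` maximizes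
`J(θ, ·)`, Fermat's theorem makes the partial derivative `DJ(θ, W θ) (0, ·)` vanish, so the term
`DJ(θ, W θ) (0, DW v)` drops out. -/

open ContinuousLinearMap

section Envelope

variable {E F : Type*} [NormedAddCommGroup E] [NormedSpace ℝ E]
  [NormedAddCommGroup F] [NormedSpace ℝ F]

theorem IsLocalMax.hasFDerivAt_comp_inr_eq_zero {J : E × F → ℝ} {DJ : E × F →L[ℝ] ℝ} {x : E} {y : F}
    (hmax : IsLocalMax (fun ω => J (x, ω)) y) (hJ : HasFDerivAt J DJ (x, y)) :
    DJ.comp (inr ℝ E F) = 0 :=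
  hmax.hasFDerivAt_eq_zero (hJ.comp y (hasFDerivAt_prodMk_right x y))

theorem HasFDerivAt.comp_prodMk_of_isLocalMax {J : E × F → ℝ} {DJ : E × F →L[ℝ] ℝ}
    {W : E → F} {DW : E →L[ℝ] F} {x : E} (hJ : HasFDerivAt J DJ (x, W x))
    (hW : HasFDerivAt W DW x) (hmax : IsLocalMax (fun ω => J (x, ω)) (W x)) :
    HasFDerivAt (fun x' => J (x', W x')) (DJ.comp (inl ℝ E F)) x := by
  have hchain : HasFDerivAt (fun x' => J (x', W x'))
      (DJ.comp ((ContinuousLinearMap.id ℝ E).prod DW)) x :=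
    hJ.comp x ((hasFDerivAt_id x).prodMk hW)
  have hpartial : ∀ w, DJ (0, w) = 0 := fun w =>
    congrArg (fun L : F →L[ℝ] ℝ => L w) (hmax.hasFDerivAt_comp_inr_eq_zero hJ)
  convert hchain using 1
  ext v
  have hsplit : ((v, DW v) : E × F) = (v, 0) + (0, DW v) := by simp
  simp only [comp_apply, prod_apply, coe_id', id_eq, inl_apply, hsplit, map_add, hpartial, add_zero]

end Envelope

/-- Gradient of H: if J is differentiable at (θ, W θ), W is differentiable at θ, and
W(θ') globally maximizes J(θ', ·) for every θ', then H(θ') = J(θ', W θ') is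
differentiable at θ with derivative v ↦ DJ(θ, W θ)(v, 0). -/
theorem gradient_of_H {n m : ℕ}
    (J : EuclideanSpace ℝ (Fin n) × EuclideanSpace ℝ (Fin m) → ℝ)
    (W : EuclideanSpace ℝ (Fin n) → EuclideanSpace ℝ (Fin m))
    (θ : EuclideanSpace ℝ (Fin n))
    (DJ : (EuclideanSpace ℝ (Fin n) × EuclideanSpace ℝ (Fin m)) →L[ℝ] ℝ)
    (hJ : HasFDerivAt J DJ (θ, W θ))
    (DW : EuclideanSpace ℝ (Fin n) →L[ℝ] EuclideanSpace ℝ (Fin m))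
    (hWdiff : HasFDerivAt W DW θ)
    (hmax : ∀ θ' ω, J (θ', ω) ≤ J (θ', W θ')) :
    DifferentiableAt ℝ (fun θ' => J (θ', W θ')) θ ∧
      ∀ v, fderiv ℝ (fun θ' => J (θ', W θ')) θ v = DJ (v, 0) := by
  have hH := hJ.comp_prodMk_of_isLocalMax hWdiff (Filter.Eventually.of_forall (hmax θ))
  exact ⟨hH.differentiableAt, fun v => by rw [hH.fderiv]; rfl⟩
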